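/- Let ψ_s be a conjunctive query with exactly one inequality x ≠ x', let ψ'_s be ψ_s with the inequality removed. Then for every finite structure D, the number of homomorphisms from ψ'_s into blowup(D,2) that satisfy x ≠ x' is at least half the total number of homomorphisms from ψ'_s into blowup(D,2). Equivalently, ψ_s(blowup(D,2)) ≥ ψ'_s(blowup(D,2))/2. -/

import Mathlib

/-- A relational signature: a type of relation symbols with arities. -/
structure Sig where
  symb : Type
  ar : symb → ℕ

/-- A finite relational structure over a signature. -/
structure Str (σ : Sig) where
  V : Type
  [fin : Fintype V]
  rel : ∀ s : σ.symb, Set (Fin (σ.ar s) → V)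

attribute [instance] Str.fin

/-- `f` is a homomorphism of relational structures from `A` to `B`. -/
def IsHom {σ : Sig} (A B : Str σ) (f : A.V → B.V) : Prop :=
  ∀ (s : σ.symb) (t : Fin (σ.ar s) → A.V), t ∈ A.rel s → (f ∘ t) ∈ B.rel s

/-- The number of homomorphisms from `A` to `B` (bag semantics: `A(B) = |Hom(A,B)|`). -/
noncomputable def homCount {σ : Sig} (A B : Str σ) : ℕ :=
  Nat.card {f : A.V → B.V // IsHom A B f}


/-- The `k`-fold blow-up of a structure `D`. -/
def blowup {σ : Sig} (D : Str σ) (k : ℕ) : Str σ where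
  V := D.V × Fin k
  rel := fun s => {t | (fun i => (t i).1) ∈ D.rel s}

/-! Duplicating the vertices of `D` leaves the second coordinate of a homomorphism into the blow-up
free. Toggling the copy of `x'` is an involution on homomorphisms which sends every homomorphism
with `h x = h x'` to one with `h x ≠ h x'`, so the homomorphisms identifying `x` and `x'` are at most
as many as those separating them. -/

theorem isHom_blowup_iff {σ : Sig} {A D : Str σ} {k : ℕ} {h : A.V → (blowup D k).V} :
    IsHom A (blowup D k) h ↔ IsHom A D (Prod.fst ∘ h) :=
  Iff.rfl

theorem Set.ncard_le_two_mul_ncard_inter {α : Type*} {s t : Set α} {f : α → α} (hs : s.Finite)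
    (hmaps : Set.MapsTo f (s \ t) (s ∩ t)) (hinj : Set.InjOn f (s \ t)) :
    s.ncard ≤ 2 * (s ∩ t).ncard := by
  have hdiff : (s \ t).ncard ≤ (s ∩ t).ncard :=
    Set.ncard_le_ncard_of_injOn f hmaps hinj (hs.subset Set.inter_subset_left)
  have hsplit := Set.ncard_inter_add_ncard_sdiff_eq_ncard s t hs
  omega

section FlipCopyAt

variable {α β : Type*} [DecidableEq α]

def flipCopyAt (a : α) (h : α → β × Fin 2) : α → β × Fin 2 :=
  Function.update h a ((h a).1, (h a).2 + 1)

theorem fst_comp_flipCopyAt (a : α) (h : α → β × Fin 2) :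
    Prod.fst ∘ flipCopyAt a h = Prod.fst ∘ h := by
  funext v
  rcases eq_or_ne v a with rfl | hv <;> simp [flipCopyAt, *]

theorem flipCopyAt_flipCopyAt (a : α) (h : α → β × Fin 2) :
    flipCopyAt a (flipCopyAt a h) = h := by
  funext v
  by_cases hv : v = a
  · subst hv
    have : (h v).2 + 1 + 1 = (h v).2 := by omega
    simp [flipCopyAt, this]
  · simp [flipCopyAt, hv]

theorem flipCopyAt_injective (a : α) : Function.Injective (flipCopyAt (β := β) a) :=
  Function.LeftInverse.injective (flipCopyAt_flipCopyAt a)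

theorem flipCopyAt_ne {a b : α} (hab : b ≠ a) {h : α → β × Fin 2} (hh : h b = h a) :
    flipCopyAt a h b ≠ flipCopyAt a h a := by
  have hflip : ∀ i : Fin 2, i ≠ i + 1 := by decide
  simp only [flipCopyAt, Function.update_of_ne hab, Function.update_self, hh]
  exact fun heq => hflip _ (congrArg Prod.snd heq)

end FlipCopyAt

theorem IsHom.blowup_flipCopyAt {σ : Sig} {A D : Str σ} [DecidableEq A.V]
    {h : A.V → D.V × Fin 2} (a : A.V) (hh : IsHom A (blowup D 2) h) :
    IsHom A (blowup D 2) (flipCopyAt a h) := by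
  have hfst : IsHom A D (Prod.fst ∘ flipCopyAt a h) := by
    rw [fst_comp_flipCopyAt]
    exact isHom_blowup_iff.mp hh
  exact isHom_blowup_iff.mpr hfst

/-- Let `ψ_s` be a conjunctive query with exactly one inequality `x ≠ x'` and `ψ'_s`
the same query with the inequality removed (canonical structure `ψ'`).  Then for every
finite structure `D`: `ψ_s(blowup(D,2)) ≥ ψ'_s(blowup(D,2)) / 2`, i.e. the number of
homomorphisms of `ψ'` into `blowup(D,2)` mapping `x` and `x'` to distinct vertices is
at least half the total number of homomorphisms of `ψ'` into `blowup(D,2)`. -/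
theorem stmt10 {σ : Sig} (ψ' D : Str σ) (x x' : ψ'.V) (hxx : x ≠ x') :
    Nat.card {h : ψ'.V → (blowup D 2).V // IsHom ψ' (blowup D 2) h} ≤
      2 * Nat.card {h : ψ'.V → (blowup D 2).V //
            IsHom ψ' (blowup D 2) h ∧ h x ≠ h x'} := by
  classical
  exact Set.ncard_le_two_mul_ncard_inter (f := flipCopyAt x') (Set.toFinite _)
    (s := {h : ψ'.V → (blowup D 2).V | IsHom ψ' (blowup D 2) h}) (t := {h | h x ≠ h x'})
    (fun h ⟨hh, hne⟩ => ⟨IsHom.blowup_flipCopyAt x' hh, flipCopyAt_ne hxx (not_not.mp hne)⟩)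
    (flipCopyAt_injective x').injOn
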